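/- arXiv:1607.02922 — 3 statements merged into one kernel-verified Lean document; each statement's English description precedes it below -/
import Mathlib

section
/- Let G = (V, E) be a finite simple graph with a partition V = P ⊔ N such that N is an independent set. Then G is a proper tagged probe interval graph with probes P and nonprobes N if and only if there exists a canonical representation of the induced subgraph G_P, with probe enumeration u_1, …, u_p and canonical sequence S : {1, …, 2p} → {1, …, p}, such that for every w ∈ N having at least one neighbor in P there exist positions s ≤ t with the property that every index S(k) with s ≤ k ≤ t is the index of a probe neighbor of w, and every probe neighbor u_i of w satisfies i = S(k) for some s ≤ k ≤ t (i.e., every nonprobe has a perfect substring in the canonical sequence). -/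
/-!
Sort the probes by left endpoint; properness makes the right endpoints sorted too. Recode every
probe endpoint by its rank among all `2p` endpoints, ordered by value, then left before right, then
by the index of the probe. Ties are broken only in ways that keep every intersection, so the ranks
form a canonical representation, and the ranks are a monotone recoding of the old values: the
endpoints inside a nonprobe interval occupy a block of consecutive positions, which is a perfect
substring. Conversely, the values at the two ends of a perfect substring span an interval that
tags exactly the probe neighbours of the nonprobe; a nonprobe without probe neighbours gets a
point that is not an endpoint.
-/

open Set

/-- `S : Fin (2*p) → Fin p` is the canonical sequence of the canonical interval
representation with left endpoints `ℓ` and right endpoints `r`. -/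
def IsCanonSeq {p : ℕ} (ℓ r : Fin p → ℝ) (S : Fin (2 * p) → Fin p) : Prop :=
  ∃ val : Fin (2 * p) → ℝ, StrictMono val ∧
    Set.range val = Set.range ℓ ∪ Set.range r ∧
    ∀ k, ℓ (S k) = val k ∨ r (S k) = val k

theorem Set.nonempty_Icc_inter_Icc_iff {α : Type*} [LinearOrder α] {a b c d : α} (hab : a ≤ b)
    (hcd : c ≤ d) : (Icc a b ∩ Icc c d).Nonempty ↔ a ≤ d ∧ c ≤ b := by
  rw [Icc_inter_Icc, nonempty_Icc, max_le_iff, le_min_iff, le_min_iff]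
  exact ⟨fun h => ⟨h.1.2, h.2.1⟩, fun h => ⟨⟨hab, h.1⟩, h.2, hcd⟩⟩

theorem Set.le_of_not_Icc_ssubset {α : Type*} [LinearOrder α] {a b c d : α} (hab : a ≤ b)
    (hac : a ≤ c) (h : ¬ Icc c d ⊂ Icc a b) : b ≤ d := by
  by_contra! hdb
  refine h (ssubset_of_subset_not_subset (Icc_subset_Icc hac hdb.le) fun hsub => ?_)
  exact hdb.not_ge (hsub ⟨hab, le_rfl⟩).2

theorem not_Icc_ssubset_of_strictMono {ι α : Type*} [LinearOrder ι] [LinearOrder α] {ℓ r : ι → α}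
    (hℓ : StrictMono ℓ) (hr : StrictMono r) (hlr : ∀ i, ℓ i ≤ r i) {i j : ι} (hij : i ≠ j) :
    ¬ Icc (ℓ i) (r i) ⊂ Icc (ℓ j) (r j) := fun h => by
  have hsub := (Icc_subset_Icc_iff (hlr i)).1 h.subset
  rcases hij.lt_or_gt with hlt | hgt
  · exact (hℓ hlt).not_ge hsub.1
  · exact (hr hgt).not_ge hsub.2

theorem monotone_of_not_Icc_ssubset {ι α : Type*} [Preorder ι] [LinearOrder α] {a b : ι → α}
    (ha : Monotone a) (hab : ∀ i, a i ≤ b i)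
    (hproper : ∀ i j, i ≠ j → ¬ Icc (a i) (b i) ⊂ Icc (a j) (b j)) : Monotone b := by
  intro i j hij
  rcases eq_or_ne i j with rfl | h
  · rfl
  · exact le_of_not_Icc_ssubset (hab i) (ha hij) (hproper j i h.symm)

theorem Set.Finite.exists_enum_monotone {α β : Type*} [LinearOrder β] {s : Set α}
    (hs : s.Finite) (f : α → β) :
    ∃ (n : ℕ) (u : Fin n → α), Function.Injective u ∧ range u = s ∧ Monotone (f ∘ u) := by
  have := hs.to_subtype
  let e : Fin (Nat.card s) ≃ s := (Finite.equivFin s).symm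
  let σ := Tuple.sort (f ∘ Subtype.val ∘ e)
  refine ⟨_, Subtype.val ∘ e ∘ σ, Subtype.val_injective.comp (e.injective.comp σ.injective),
    ?_, Tuple.monotone_sort (f ∘ Subtype.val ∘ e)⟩
  rw [(e.surjective.comp σ.surjective).range_comp, Subtype.range_coe]

theorem Monotone.exists_Icc_eq_preimage {α β : Type*} [Fintype α] [LinearOrder α] [Preorder β]
    {g : α → β} (hg : Monotone g) {J : Set β} (hJ : J.OrdConnected) (hne : ∃ k, g k ∈ J) :
    ∃ s t, s ≤ t ∧ ∀ k, g k ∈ J ↔ k ∈ Icc s t := by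
  classical
  let K := Finset.univ.filter fun k => g k ∈ J
  have hK : K.Nonempty := let ⟨k, hk⟩ := hne; ⟨k, by simpa [K] using hk⟩
  have hmem : ∀ k, k ∈ K ↔ g k ∈ J := by simp [K]
  refine ⟨K.min' hK, K.max' hK, K.min'_le _ (K.max'_mem hK), fun k => ⟨fun hk => ?_, fun hk => ?_⟩⟩
  · exact ⟨K.min'_le _ ((hmem k).2 hk), K.le_max' _ ((hmem k).2 hk)⟩
  · exact hJ.out ((hmem _).1 (K.min'_mem hK)) ((hmem _).1 (K.max'_mem hK)) ⟨hg hk.1, hg hk.2⟩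

section Rank

variable {E α : Type*} [Fintype E] [LinearOrder α] (key : E → α)

def keyRank (e : E) : ℕ := (Finset.univ.filter fun e' => key e' < key e).card

theorem keyRank_lt_keyRank_iff {x y : E} : keyRank key x < keyRank key y ↔ key x < key y := by
  classical
  constructor
  · intro h
    by_contra! hyx
    exact h.not_ge <| Finset.card_le_card <|
      Finset.monotone_filter_right _ fun _ _ he => he.trans_le hyx
  · intro hxy
    refine Finset.card_lt_card (Finset.ssubset_iff_of_subset ?_ |>.2 ⟨x, by simpa, by simp⟩)
    exact Finset.monotone_filter_right _ fun _ _ he => he.trans hxy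

theorem keyRank_lt_card (e : E) : keyRank key e < Fintype.card E :=
  Finset.card_lt_card (Finset.filter_ssubset.2 ⟨e, Finset.mem_univ e, lt_irrefl _⟩)

variable {key}

theorem keyRank_injective (hkey : Function.Injective key) : Function.Injective (keyRank key) :=
  fun _ _ h => hkey <| le_antisymm
    (not_lt.1 fun hyx => ((keyRank_lt_keyRank_iff key).2 hyx).ne' h)
    (not_lt.1 fun hxy => ((keyRank_lt_keyRank_iff key).2 hxy).ne h)

noncomputable def keyRankEquiv (hkey : Function.Injective key) {n : ℕ} (hn : Fintype.card E = n) :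
    E ≃ Fin n :=
  Equiv.ofBijective (fun e => ⟨keyRank key e, hn ▸ keyRank_lt_card key e⟩) <|
    (Fintype.bijective_iff_injective_and_card _).2
      ⟨fun x y h => keyRank_injective hkey (Fin.val_eq_of_eq h), by simp [hn]⟩

theorem keyRankEquiv_lt_iff (hkey : Function.Injective key) {n : ℕ} (hn : Fintype.card E = n)
    {x y : E} : keyRankEquiv hkey hn x < keyRankEquiv hkey hn y ↔ key x < key y :=
  keyRank_lt_keyRank_iff key

end Rank

def IsPerfectSubstring {ι κ : Type*} [Preorder ι] (S : ι → κ) (nbr : κ → Prop) (s t : ι) :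
    Prop :=
  s ≤ t ∧ (∀ k, s ≤ k → k ≤ t → nbr (S k)) ∧ (∀ i, nbr i → ∃ k, s ≤ k ∧ k ≤ t ∧ S k = i)

section Canonical

variable {p : ℕ} (a b : Fin p → ℝ)

-- `.inl i` and `.inr i` are the left and right endpoints of interval `i`; among equal values,
-- left endpoints come first (so touching intervals still meet), then smaller indices.
def endpointKey (e : Fin p ⊕ Fin p) : ℝ ×ₗ (Fin p ⊕ₗ Fin p) := toLex (Sum.elim a b e, toLex e)

theorem endpointKey_injective : Function.Injective (endpointKey a b) :=
  fun _ _ h => toLex.injective (congrArg (fun z => (ofLex z).2) h)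

noncomputable def endpointPos : Fin p ⊕ Fin p ≃ Fin (2 * p) :=
  keyRankEquiv (endpointKey_injective a b) (by simp [two_mul])

noncomputable def endpointCoord (e : Fin p ⊕ Fin p) : ℝ := (endpointPos a b e : ℕ)

noncomputable def canonLeft (i : Fin p) : ℝ := endpointCoord a b (.inl i)

noncomputable def canonRight (i : Fin p) : ℝ := endpointCoord a b (.inr i)

noncomputable def canonSeq (k : Fin (2 * p)) : Fin p := Sum.elim id id ((endpointPos a b).symm k)

variable {a b}

theorem endpointPos_lt_iff {x y : Fin p ⊕ Fin p} :
    endpointPos a b x < endpointPos a b y ↔ endpointKey a b x < endpointKey a b y :=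
  keyRankEquiv_lt_iff _ _

theorem endpointCoord_lt_iff {x y : Fin p ⊕ Fin p} :
    endpointCoord a b x < endpointCoord a b y ↔ endpointKey a b x < endpointKey a b y := by
  rw [endpointCoord, endpointCoord, Nat.cast_lt, Fin.val_fin_lt, endpointPos_lt_iff]

theorem canonSeq_endpointPos (e : Fin p ⊕ Fin p) :
    canonSeq a b (endpointPos a b e) = Sum.elim id id e := by
  simp [canonSeq]

theorem monotone_elim_comp_endpointPos_symm :
    Monotone (Sum.elim a b ∘ (endpointPos a b).symm) := by
  intro k k' hk
  obtain ⟨x, rfl⟩ := (endpointPos a b).surjective k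
  obtain ⟨y, rfl⟩ := (endpointPos a b).surjective k'
  rcases hk.eq_or_lt with h | h
  · rw [h]
  · simp only [Function.comp_apply, Equiv.symm_apply_apply]
    exact Prod.Lex.monotone_fst _ _ (endpointPos_lt_iff.1 h).le

theorem canonLeft_lt_canonRight_iff {i j : Fin p} :
    canonLeft a b i < canonRight a b j ↔ a i ≤ b j := by
  simp [canonLeft, canonRight, endpointCoord_lt_iff, endpointKey, Prod.Lex.toLex_lt_toLex']

theorem canonLeft_ne_canonRight (i j : Fin p) : canonLeft a b i ≠ canonRight a b j := by
  simp [canonLeft, canonRight, endpointCoord, Fin.val_inj]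

theorem canonLeft_le_canonRight_iff {i j : Fin p} :
    canonLeft a b i ≤ canonRight a b j ↔ a i ≤ b j := by
  rw [(canonLeft_ne_canonRight i j).le_iff_lt, canonLeft_lt_canonRight_iff]

theorem strictMono_canonLeft (ha : Monotone a) : StrictMono (canonLeft a b) := fun _ _ hij =>
  endpointCoord_lt_iff.2 <|
    Prod.Lex.toLex_lt_toLex'.2 ⟨ha hij.le, fun _ => Sum.Lex.inl_lt_inl_iff.2 hij⟩

theorem strictMono_canonRight (hb : Monotone b) : StrictMono (canonRight a b) := fun _ _ hij =>
  endpointCoord_lt_iff.2 <|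
    Prod.Lex.toLex_lt_toLex'.2 ⟨hb hij.le, fun _ => Sum.Lex.inr_lt_inr_iff.2 hij⟩

theorem isCanonSeq_canonSeq : IsCanonSeq (canonLeft a b) (canonRight a b) (canonSeq a b) := by
  refine ⟨fun k => (k : ℕ), fun k k' h => Nat.cast_lt.2 h, ?_, fun k => ?_⟩
  · ext x
    constructor
    · rintro ⟨k, rfl⟩
      obtain ⟨e | e, rfl⟩ := (endpointPos a b).surjective k
      exacts [Or.inl ⟨e, rfl⟩, Or.inr ⟨e, rfl⟩]
    · rintro (⟨i, rfl⟩ | ⟨i, rfl⟩) <;> exact ⟨_, rfl⟩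
  · obtain ⟨e | e, rfl⟩ := (endpointPos a b).surjective k
    · exact Or.inl (by rw [canonSeq_endpointPos]; rfl)
    · exact Or.inr (by rw [canonSeq_endpointPos]; rfl)

theorem nonempty_canon_inter_iff (hab : ∀ i, a i ≤ b i) {i j : Fin p} :
    (Icc (canonLeft a b i) (canonRight a b i) ∩ Icc (canonLeft a b j) (canonRight a b j)).Nonempty ↔
      (Icc (a i) (b i) ∩ Icc (a j) (b j)).Nonempty := by
  rw [nonempty_Icc_inter_Icc_iff (hab i) (hab j), nonempty_Icc_inter_Icc_iff
    (canonLeft_le_canonRight_iff.2 (hab i)) (canonLeft_le_canonRight_iff.2 (hab j)),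
    canonLeft_le_canonRight_iff, canonLeft_le_canonRight_iff]

theorem exists_isPerfectSubstring_canonSeq {c d : ℝ} {nbr : Fin p → Prop}
    (hnbr : ∀ i, nbr i ↔ a i ∈ Icc c d ∨ b i ∈ Icc c d) (hne : ∃ i, nbr i) :
    ∃ s t, IsPerfectSubstring (canonSeq a b) nbr s t := by
  have hne' : ∃ k, (Sum.elim a b ∘ (endpointPos a b).symm) k ∈ Icc c d := by
    obtain ⟨i, hi⟩ := hne
    rcases (hnbr i).1 hi with h | h
    exacts [⟨endpointPos a b (.inl i), by simpa⟩, ⟨endpointPos a b (.inr i), by simpa⟩]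
  obtain ⟨s, t, hst, hwin⟩ :=
    monotone_elim_comp_endpointPos_symm.exists_Icc_eq_preimage ordConnected_Icc hne'
  have hpos : ∀ e, Sum.elim a b e ∈ Icc c d ↔ endpointPos a b e ∈ Icc s t := fun e => by
    simpa using hwin (endpointPos a b e)
  refine ⟨s, t, hst, fun k hs ht => ?_, fun i hi => ?_⟩
  · obtain ⟨e | e, rfl⟩ := (endpointPos a b).surjective k
    · simpa [canonSeq_endpointPos, hnbr] using Or.inl ((hpos (.inl e)).2 ⟨hs, ht⟩)
    · simpa [canonSeq_endpointPos, hnbr] using Or.inr ((hpos (.inr e)).2 ⟨hs, ht⟩)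
  · rcases (hnbr i).1 hi with h | h
    · exact ⟨_, ((hpos (.inl i)).1 h).1, ((hpos (.inl i)).1 h).2, canonSeq_endpointPos _⟩
    · exact ⟨_, ((hpos (.inr i)).1 h).1, ((hpos (.inr i)).1 h).2, canonSeq_endpointPos _⟩

end Canonical

section CanonSeq

variable {p : ℕ} {ℓ r : Fin p → ℝ} {S : Fin (2 * p) → Fin p} {val : Fin (2 * p) → ℝ}

theorem endpoint_mem_Icc_iff (hval : StrictMono val) (hrange : range val = range ℓ ∪ range r)
    (hS : ∀ k, ℓ (S k) = val k ∨ r (S k) = val k) (hℓ : Function.Injective ℓ)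
    (hr : Function.Injective r) (hne : ∀ i j, ℓ i ≠ r j) {s t : Fin (2 * p)} {i : Fin p} :
    ℓ i ∈ Icc (val s) (val t) ∨ r i ∈ Icc (val s) (val t) ↔ ∃ k, s ≤ k ∧ k ≤ t ∧ S k = i := by
  constructor
  · intro h
    obtain ⟨k, hk, hSk⟩ : ∃ k, val k ∈ Icc (val s) (val t) ∧ S k = i := by
      rcases h with h | h
      · obtain ⟨k, hk⟩ : ℓ i ∈ range val := hrange ▸ Or.inl (mem_range_self i)
        refine ⟨k, hk ▸ h, ?_⟩
        rcases hS k with h' | h'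
        · exact hℓ (h'.trans hk)
        · exact absurd (h'.trans hk).symm (hne i (S k))
      · obtain ⟨k, hk⟩ : r i ∈ range val := hrange ▸ Or.inr (mem_range_self i)
        refine ⟨k, hk ▸ h, ?_⟩
        rcases hS k with h' | h'
        · exact absurd (h'.trans hk) (hne (S k) i)
        · exact hr (h'.trans hk)
    exact ⟨k, hval.le_iff_le.1 hk.1, hval.le_iff_le.1 hk.2, hSk⟩
  · rintro ⟨k, hs, ht, rfl⟩
    have hk : val k ∈ Icc (val s) (val t) := ⟨hval.monotone hs, hval.monotone ht⟩
    rcases hS k with h | h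
    exacts [Or.inl (h ▸ hk), Or.inr (h ▸ hk)]

theorem exists_tagging_Icc (hval : StrictMono val) (hrange : range val = range ℓ ∪ range r)
    (hS : ∀ k, ℓ (S k) = val k ∨ r (S k) = val k) (hℓ : Function.Injective ℓ)
    (hr : Function.Injective r) (hne : ∀ i j, ℓ i ≠ r j) {nbr : Fin p → Prop}
    (hperf : (∃ i, nbr i) → ∃ s t, IsPerfectSubstring S nbr s t) :
    ∃ c d, c ≤ d ∧ ∀ i, nbr i ↔ ℓ i ∈ Icc c d ∨ r i ∈ Icc c d := by
  by_cases hnbr : ∃ i, nbr i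
  · obtain ⟨s, t, hst, hin, hall⟩ := hperf hnbr
    refine ⟨val s, val t, hval.monotone hst, fun i => ?_⟩
    rw [endpoint_mem_Icc_iff hval hrange hS hℓ hr hne]
    exact ⟨hall i, fun ⟨k, hs, ht, hk⟩ => hk ▸ hin k hs ht⟩
  · obtain ⟨c, hc⟩ := (finite_range val).exists_notMem
    refine ⟨c, c, le_rfl, fun i => iff_of_false (fun hi => hnbr ⟨i, hi⟩) ?_⟩
    rw [hrange] at hc
    rw [Icc_self, mem_singleton_iff, mem_singleton_iff]
    rintro (rfl | rfl)
    exacts [hc (Or.inl (mem_range_self i)), hc (Or.inr (mem_range_self i))]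

end CanonSeq

section Representation

variable {V : Type*} (G : SimpleGraph V) (P N : Set V)

def IsPTPIGRep (ℓ r : V → ℝ) : Prop :=
  (∀ x, ℓ x ≤ r x) ∧
  (∀ x ∈ P, ∀ y ∈ P, x ≠ y → (G.Adj x y ↔ (Icc (ℓ x) (r x) ∩ Icc (ℓ y) (r y)).Nonempty)) ∧
  (∀ x ∈ P, ∀ y ∈ P, x ≠ y → ¬ Icc (ℓ x) (r x) ⊂ Icc (ℓ y) (r y)) ∧
  (∀ x ∈ P, ∀ w ∈ N, (G.Adj x w ↔ ℓ x ∈ Icc (ℓ w) (r w) ∨ r x ∈ Icc (ℓ w) (r w)))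

variable {G N}

theorem isPTPIGRep_extend {p : ℕ} {u : Fin p → V} (hu : Function.Injective u)
    (hN : range u = Nᶜ) {ℓ r : Fin p → ℝ} (hlr : ∀ i, ℓ i ≤ r i) (hℓ : StrictMono ℓ)
    (hr : StrictMono r)
    (hadj : ∀ i j, i ≠ j → (G.Adj (u i) (u j) ↔ (Icc (ℓ i) (r i) ∩ Icc (ℓ j) (r j)).Nonempty))
    {c d : V → ℝ} (hcd : ∀ w ∈ N, c w ≤ d w)
    (htag : ∀ w ∈ N, ∀ i, G.Adj (u i) w ↔ ℓ i ∈ Icc (c w) (d w) ∨ r i ∈ Icc (c w) (d w)) :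
    IsPTPIGRep G (range u) N (Function.extend u ℓ c) (Function.extend u r d) := by
  have hnot : ∀ x, x ∉ range u ↔ x ∈ N := by simp [hN]
  refine ⟨fun x => ?_, ?_, ?_, ?_⟩
  · by_cases hx : x ∈ range u
    · obtain ⟨i, rfl⟩ := hx
      simpa only [hu.extend_apply] using hlr i
    · rw [Function.extend_apply' _ _ _ hx, Function.extend_apply' _ _ _ hx]
      exact hcd x ((hnot x).1 hx)
  · simp only [forall_mem_range, hu.extend_apply]
    exact fun i j hij => hadj i j (ne_of_apply_ne u hij)
  · simp only [forall_mem_range, hu.extend_apply]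
    exact fun i j hij => not_Icc_ssubset_of_strictMono hℓ hr hlr (ne_of_apply_ne u hij)
  · simp only [forall_mem_range, hu.extend_apply]
    intro i w hw
    rw [Function.extend_apply' _ _ _ ((hnot w).2 hw), Function.extend_apply' _ _ _ ((hnot w).2 hw)]
    exact htag w hw i

end Representation

theorem stmt6_general {V : Type*} [Fintype V] (G : SimpleGraph V) (P N : Set V)
    (hPN : P = Nᶜ) :
    (∃ ℓ r : V → ℝ,
      (∀ x, ℓ x ≤ r x) ∧
      (∀ x ∈ P, ∀ y ∈ P, x ≠ y →
        (G.Adj x y ↔ (Icc (ℓ x) (r x) ∩ Icc (ℓ y) (r y)).Nonempty)) ∧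
      (∀ x ∈ P, ∀ y ∈ P, x ≠ y → ¬ Icc (ℓ x) (r x) ⊂ Icc (ℓ y) (r y)) ∧
      (∀ x ∈ P, ∀ w ∈ N,
        (G.Adj x w ↔ ℓ x ∈ Icc (ℓ w) (r w) ∨ r x ∈ Icc (ℓ w) (r w))))
    ↔
    (∃ (p : ℕ) (u : Fin p → V) (ℓ r : Fin p → ℝ) (S : Fin (2 * p) → Fin p),
      Function.Injective u ∧ Set.range u = P ∧
      (∀ i, ℓ i ≤ r i) ∧ StrictMono ℓ ∧ StrictMono r ∧
      (∀ i j : Fin p, ℓ i ≠ r j) ∧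
      (∀ i j : Fin p, i ≠ j →
        (G.Adj (u i) (u j) ↔ (Icc (ℓ i) (r i) ∩ Icc (ℓ j) (r j)).Nonempty)) ∧
      IsCanonSeq ℓ r S ∧
      (∀ w ∈ N, (∃ x ∈ P, G.Adj x w) →
        ∃ s t : Fin (2 * p), s ≤ t ∧
          (∀ k, s ≤ k → k ≤ t → G.Adj (u (S k)) w) ∧
          (∀ i : Fin p, G.Adj (u i) w → ∃ k, s ≤ k ∧ k ≤ t ∧ S k = i))) := by
  constructor
  · rintro ⟨ℓ, r, hlr, hadjP, hproper, hadjN⟩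
    obtain ⟨p, u, hu, rfl, hℓu⟩ := P.toFinite.exists_enum_monotone ℓ
    have hru : Monotone (r ∘ u) := monotone_of_not_Icc_ssubset hℓu (fun i => hlr (u i))
      fun i j h => hproper _ (mem_range_self i) _ (mem_range_self j) (hu.ne h)
    refine ⟨p, u, _, _, _, hu, rfl, fun i => canonLeft_le_canonRight_iff.2 (hlr (u i)),
      strictMono_canonLeft hℓu, strictMono_canonRight hru, canonLeft_ne_canonRight,
      fun i j hij => ?_, isCanonSeq_canonSeq, fun w hw ⟨x, hx, hxw⟩ => ?_⟩
    · rw [hadjP _ (mem_range_self i) _ (mem_range_self j) (hu.ne hij)]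
      exact (nonempty_canon_inter_iff (a := ℓ ∘ u) (b := r ∘ u) fun i => hlr (u i)).symm
    · obtain ⟨i, rfl⟩ := hx
      exact exists_isPerfectSubstring_canonSeq (fun j => hadjN _ (mem_range_self j) w hw) ⟨i, hxw⟩
  · rintro ⟨p, u, ℓ, r, S, hu, rfl, hlr, hℓ, hr, hne, hadj, ⟨val, hval, hrange, hS⟩, hperf⟩
    have htag : ∀ w ∈ N, ∃ c d, c ≤ d ∧ ∀ i, G.Adj (u i) w ↔ ℓ i ∈ Icc c d ∨ r i ∈ Icc c d :=
      fun w hw => exists_tagging_Icc hval hrange hS hℓ.injective hr.injective hne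
        fun ⟨i, hi⟩ => hperf w hw ⟨u i, mem_range_self i, hi⟩
    choose! c d hcd hc using htag
    exact ⟨_, _, isPTPIGRep_extend hu hPN hlr hℓ hr hadj hcd hc⟩

/-- main characterization: `G` with independent set `N` and probes
`P = Nᶜ` is a proper tagged probe interval graph iff there is a canonical
representation of the induced subgraph `G_P` (enumeration `u`, intervals `[ℓ i, r i]`,
canonical sequence `S`) such that every nonprobe `w` with at least one probe neighbor
has a perfect substring in `S`: positions `s ≤ t` such that every `S k` with
`s ≤ k ≤ t` indexes a probe neighbor of `w` and every probe neighbor of `w` occurs as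
some `S k` with `s ≤ k ≤ t`. -/
theorem stmt6 {V : Type*} [Fintype V] (G : SimpleGraph V) (P N : Set V)
    (hPN : P = Nᶜ)
    (hind : ∀ w ∈ N, ∀ w' ∈ N, ¬ G.Adj w w') :
    (∃ ℓ r : V → ℝ,
      (∀ x, ℓ x ≤ r x) ∧
      (∀ x ∈ P, ∀ y ∈ P, x ≠ y →
        (G.Adj x y ↔ (Icc (ℓ x) (r x) ∩ Icc (ℓ y) (r y)).Nonempty)) ∧
      (∀ x ∈ P, ∀ y ∈ P, x ≠ y → ¬ Icc (ℓ x) (r x) ⊂ Icc (ℓ y) (r y)) ∧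
      (∀ x ∈ P, ∀ w ∈ N,
        (G.Adj x w ↔ ℓ x ∈ Icc (ℓ w) (r w) ∨ r x ∈ Icc (ℓ w) (r w))))
    ↔
    (∃ (p : ℕ) (u : Fin p → V) (ℓ r : Fin p → ℝ) (S : Fin (2 * p) → Fin p),
      Function.Injective u ∧ Set.range u = P ∧
      (∀ i, ℓ i ≤ r i) ∧ StrictMono ℓ ∧ StrictMono r ∧
      (∀ i j : Fin p, ℓ i ≠ r j) ∧
      (∀ i j : Fin p, i ≠ j →
        (G.Adj (u i) (u j) ↔ (Icc (ℓ i) (r i) ∩ Icc (ℓ j) (r j)).Nonempty)) ∧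
      IsCanonSeq ℓ r S ∧
      (∀ w ∈ N, (∃ x ∈ P, G.Adj x w) →
        ∃ s t : Fin (2 * p), s ≤ t ∧
          (∀ k, s ≤ k → k ≤ t → G.Adj (u (S k)) w) ∧
          (∀ i : Fin p, G.Adj (u i) w → ∃ k, s ≤ k ∧ k ≤ t ∧ S k = i))) :=
  stmt6_general G P N hPN
end

section
/- Let G = (V, E) with V = P ⊔ N be a proper tagged probe interval graph with probes P and nonprobes N such that the induced subgraph G_P is connected and reduced (no two distinct probe vertices have the same closed neighborhood in G_P). Fix a canonical representation of G_P with probe enumeration u_1, …, u_p and canonical sequence S. Then for every w ∈ N having at least two neighbors in P, there do not exist positions s_1 ≤ t_1 < s_2 ≤ t_2 such that both the position range [s_1, t_1] and the position range [s_2, t_2] are perfect substrings of w in S. (In other words, a nonprobe vertex cannot have two disjoint perfect substrings, unless the substring consists of a single element.) -/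
open Set

/-- The position range `[s, t]` is a perfect substring of the nonprobe `w` in the
canonical sequence `S` (probes enumerated by `u`). -/
def PerfectSubstring {V : Type*} {p : ℕ} (G : SimpleGraph V) (u : Fin p → V)
    (S : Fin (2 * p) → Fin p) (w : V) (s t : Fin (2 * p)) : Prop :=
  (∀ k, s ≤ k → k ≤ t → G.Adj (u (S k)) w) ∧
  (∀ i : Fin p, G.Adj (u i) w → ∃ k, s ≤ k ∧ k ≤ t ∧ S k = i)

/-- in a PTPIG whose probe subgraph `G_P` is connected and reduced,
fixing a canonical representation of `G_P` with canonical sequence `S`, a nonprobe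
`w` with at least two probe neighbors cannot have two disjoint perfect substrings
in `S`. -/
theorem stmt7 {V : Type*} [Fintype V] (G : SimpleGraph V) (P N : Set V)
    (hPN : P = Nᶜ)
    (hind : ∀ w ∈ N, ∀ w' ∈ N, ¬ G.Adj w w')
    -- G is a PTPIG with probes P and nonprobes N:
    (hPTPIG : ∃ a b : V → ℝ,
      (∀ x, a x ≤ b x) ∧
      (∀ x ∈ P, ∀ y ∈ P, x ≠ y →
        (G.Adj x y ↔ (Icc (a x) (b x) ∩ Icc (a y) (b y)).Nonempty)) ∧
      (∀ x ∈ P, ∀ y ∈ P, x ≠ y → ¬ Icc (a x) (b x) ⊂ Icc (a y) (b y)) ∧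
      (∀ x ∈ P, ∀ w ∈ N,
        (G.Adj x w ↔ a x ∈ Icc (a w) (b w) ∨ b x ∈ Icc (a w) (b w))))
    -- G_P is connected:
    (hconn : (SimpleGraph.induce P G).Connected)
    -- G_P is reduced (no two distinct probes have the same closed neighborhood in G_P):
    (hred : ∀ x ∈ P, ∀ y ∈ P,
      (∀ z ∈ P, ((z = x ∨ G.Adj x z) ↔ (z = y ∨ G.Adj y z))) → x = y)
    -- a fixed canonical representation of G_P with enumeration u and sequence S:
    {p : ℕ} (u : Fin p → V) (hu : Function.Injective u) (hur : Set.range u = P)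
    (ℓ r : Fin p → ℝ)
    (hlr : ∀ i, ℓ i ≤ r i) (hl : StrictMono ℓ) (hr : StrictMono r)
    (hne : ∀ i j : Fin p, ℓ i ≠ r j)
    (hAdj : ∀ i j : Fin p, i ≠ j →
      (G.Adj (u i) (u j) ↔ (Icc (ℓ i) (r i) ∩ Icc (ℓ j) (r j)).Nonempty))
    (S : Fin (2 * p) → Fin p) (hS : IsCanonSeq ℓ r S) :
    ∀ w ∈ N, (∃ x ∈ P, ∃ y ∈ P, x ≠ y ∧ G.Adj x w ∧ G.Adj y w) →
      ¬ ∃ s₁ t₁ s₂ t₂ : Fin (2 * p), s₁ ≤ t₁ ∧ t₁ < s₂ ∧ s₂ ≤ t₂ ∧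
        PerfectSubstring G u S w s₁ t₁ ∧ PerfectSubstring G u S w s₂ t₂ := by

  intro w hw hxy2 hcon
  obtain ⟨val, hmono, hrange, hend⟩ := hS
  obtain ⟨s₁, t₁, s₂, t₂, hst1, hts, hst2, ⟨P1a, P1b⟩, ⟨P2a, P2b⟩⟩ := hcon
  obtain ⟨x, hx, y, hy, hxyne, hxw, hyw⟩ := hxy2
  -- positions of left and right endpoints
  have hLex : ∀ i : Fin p, ∃ k, val k = ℓ i := by
    intro i
    have : ℓ i ∈ Set.range val := by rw [hrange]; exact Or.inl ⟨i, rfl⟩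
    obtain ⟨k, hk⟩ := this; exact ⟨k, hk⟩
  have hRex : ∀ i : Fin p, ∃ k, val k = r i := by
    intro i
    have : r i ∈ Set.range val := by rw [hrange]; exact Or.inr ⟨i, rfl⟩
    obtain ⟨k, hk⟩ := this; exact ⟨k, hk⟩
  choose L hLval using hLex
  choose R hRval using hRex
  have hlir : ∀ i, ℓ i < r i := fun i => lt_of_le_of_ne (hlr i) (hne i i)
  have hSL : ∀ i, S (L i) = i := by
    intro i
    rcases hend (L i) with h | h
    · exact hl.injective (h.trans (hLval i))
    · exact absurd ((hLval i).symm.trans h.symm) (hne i (S (L i)))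
  have hSR : ∀ i, S (R i) = i := by
    intro i
    rcases hend (R i) with h | h
    · exact absurd (h.trans (hRval i)) (hne (S (R i)) i)
    · exact hr.injective (h.trans (hRval i))
  have hF1 : ∀ k, k = L (S k) ∨ k = R (S k) := by
    intro k
    rcases hend k with h | h
    · exact Or.inl (hmono.injective ((hLval (S k)).trans h)).symm
    · exact Or.inr (hmono.injective ((hRval (S k)).trans h)).symm
  have hLR : ∀ i, L i < R i := by
    intro i
    have : val (L i) < val (R i) := by rw [hLval, hRval]; exact hlir i
    exact hmono.lt_iff_lt.mp this
  -- each neighbor has its left endpoint in the first range and right in the second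
  have key : ∀ m : Fin p, G.Adj (u m) w →
      s₁ ≤ L m ∧ L m ≤ t₁ ∧ s₂ ≤ R m ∧ R m ≤ t₂ := by
    intro m hm
    obtain ⟨k₁, hk1a, hk1b, hk1c⟩ := P1b m hm
    obtain ⟨k₂, hk2a, hk2b, hk2c⟩ := P2b m hm
    have hk12 : k₁ < k₂ := lt_of_le_of_lt hk1b (lt_of_lt_of_le hts hk2a)
    have h1 := hF1 k₁; rw [hk1c] at h1
    have h2 := hF1 k₂; rw [hk2c] at h2
    rcases h1 with h1 | h1 <;> rcases h2 with h2 | h2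
    · exact absurd (h1 ▸ h2 ▸ hk12) (lt_irrefl _)
    · exact ⟨h1 ▸ hk1a, h1 ▸ hk1b, h2 ▸ hk2a, h2 ▸ hk2b⟩
    · exact absurd (h1 ▸ h2 ▸ hk12) (not_lt_of_gt (hLR m))
    · exact absurd (h1 ▸ h2 ▸ hk12) (lt_irrefl _)
  -- adjacency characterization for probes
  have hadj' : ∀ m n : Fin p, m ≠ n →
      (G.Adj (u m) (u n) ↔ (ℓ m ≤ r n ∧ ℓ n ≤ r m)) := by
    intro m n hmn
    rw [hAdj m n hmn, Set.Icc_inter_Icc, Set.nonempty_Icc, max_le_iff, le_min_iff,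
      le_min_iff]
    constructor
    · rintro ⟨⟨_, h1⟩, ⟨h2, _⟩⟩; exact ⟨h1, h2⟩
    · rintro ⟨h1, h2⟩; exact ⟨⟨hlr m, h1⟩, ⟨h2, hlr n⟩⟩
  -- main claim: no two distinct neighbors
  have main : ∀ i j : Fin p, i < j → G.Adj (u i) w → G.Adj (u j) w → False := by
    intro i j hij hiw hjw
    have hb1 : (i : ℕ) + 1 < p := lt_of_le_of_lt hij j.isLt
    set b : Fin p := ⟨(i : ℕ) + 1, hb1⟩ with hbdef
    have hab : i < b := by simp [hbdef, Fin.lt_def]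
    have hbj : b ≤ j := by
      rw [Fin.le_def]; exact hij
    have keyi := key i hiw
    have keyj := key j hjw
    -- b is also a neighbor of w
    have hLbLi : L i < L b := by
      apply hmono.lt_iff_lt.mp; rw [hLval, hLval]; exact hl hab
    have hLbLj : L b ≤ L j := by
      apply hmono.le_iff_le.mp; rw [hLval, hLval]; exact hl.monotone hbj
    have hLbrange : s₁ ≤ L b ∧ L b ≤ t₁ :=
      ⟨le_of_lt (lt_of_le_of_lt keyi.1 hLbLi), le_trans hLbLj keyj.2.1⟩
    have hbw : G.Adj (u b) w := by
      have := P1a (L b) hLbrange.1 hLbrange.2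
      rwa [hSL] at this
    have keyb := key b hbw
    -- no right endpoint strictly between ℓ i and ℓ b
    have hnoR : ∀ m : Fin p, ¬ (ℓ i < r m ∧ r m < ℓ b) := by
      rintro m ⟨h1, h2⟩
      have hRm1 : L i < R m := by
        apply hmono.lt_iff_lt.mp; rw [hLval, hRval]; exact h1
      have hRm2 : R m < L b := by
        apply hmono.lt_iff_lt.mp; rw [hRval, hLval]; exact h2
      have hmw : G.Adj (u m) w := by
        have := P1a (R m) (le_trans keyi.1 (le_of_lt hRm1))
          (le_trans (le_of_lt hRm2) hLbrange.2)
        rwa [hSR] at this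
      have := (key m hmw).2.2.1
      exact absurd (lt_of_le_of_lt this (lt_of_lt_of_le hRm2 hLbrange.2))
        (not_lt_of_ge (le_of_lt hts))
    -- no left endpoint strictly between r i and r b
    have hnoL : ∀ m : Fin p, ¬ (r i < ℓ m ∧ ℓ m < r b) := by
      rintro m ⟨h1, h2⟩
      have hLm1 : R i < L m := by
        apply hmono.lt_iff_lt.mp; rw [hRval, hLval]; exact h1
      have hLm2 : L m < R b := by
        apply hmono.lt_iff_lt.mp; rw [hLval, hRval]; exact h2
      have hmw : G.Adj (u m) w := by
        have := P2a (L m) (le_trans keyi.2.2.1 (le_of_lt hLm1))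
          (le_trans (le_of_lt hLm2) keyb.2.2.2)
        rwa [hSL] at this
      have := (key m hmw).2.1
      exact absurd (lt_of_le_of_lt keyi.2.2.1 hLm1)
        (not_lt_of_ge (le_trans this (le_of_lt hts)))
    -- ℓ of any neighbor is less than r of any neighbor
    have hlrn : ∀ m n : Fin p, G.Adj (u m) w → G.Adj (u n) w → ℓ m < r n := by
      intro m n hm hn
      have : L m < R n :=
        lt_of_le_of_lt (key m hm).2.1 (lt_of_lt_of_le hts (key n hn).2.2.1)
      have := hmono this
      rwa [hLval, hRval] at this
    have hibne : i ≠ b := ne_of_lt hab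
    have hadjib : G.Adj (u i) (u b) := by
      rw [hadj' i b hibne]
      exact ⟨le_of_lt (lt_of_lt_of_le (hl hab) (hlr b)), le_of_lt (hlrn b i hbw hiw)⟩
    -- u i and u b are twins, contradicting reducedness
    have hmemP : ∀ m : Fin p, u m ∈ P := by
      intro m; rw [← hur]; exact ⟨m, rfl⟩
    have htwin : ∀ z ∈ P, ((z = u i ∨ G.Adj (u i) z) ↔ (z = u b ∨ G.Adj (u b) z)) := by
      intro z hz
      rw [← hur] at hz
      obtain ⟨m, rfl⟩ := hz
      by_cases hmi : m = i
      · subst hmi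
        constructor
        · intro _; exact Or.inr hadjib.symm
        · intro _; exact Or.inl rfl
      by_cases hmb : m = b
      · subst hmb
        constructor
        · intro _; exact Or.inl rfl
        · intro _; exact Or.inr hadjib
      have hne1 : u m ≠ u i := fun h => hmi (hu h)
      have hne2 : u m ≠ u b := fun h => hmb (hu h)
      have him : i ≠ m := fun h => hmi h.symm
      have hbm : b ≠ m := fun h => hmb h.symm
      have hiff : G.Adj (u i) (u m) ↔ G.Adj (u b) (u m) := by
        rw [hadj' i m him, hadj' b m hbm]
        constructor
        · rintro ⟨h1, h2⟩
          refine ⟨?_, le_trans h2 (le_of_lt (hr hab))⟩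
          have h1' : ℓ i < r m := lt_of_le_of_ne h1 (hne i m)
          by_contra hc
          exact hnoR m ⟨h1', lt_of_not_ge hc⟩
        · rintro ⟨h1, h2⟩
          refine ⟨le_of_lt (lt_of_lt_of_le (hl hab) h1), ?_⟩
          have h2' : ℓ m < r b := lt_of_le_of_ne h2 (hne m b)
          by_contra hc
          exact hnoL m ⟨lt_of_not_ge hc, h2'⟩
      constructor
      · rintro (h | h)
        · exact absurd h hne1
        · exact Or.inr (hiff.mp h)
      · rintro (h | h)
        · exact absurd h hne2
        · exact Or.inr (hiff.mpr h)
    have := hred (u i) (hmemP i) (u b) (hmemP b) htwin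
    exact absurd (hu this) hibne
  -- finish using the two distinct neighbors
  rw [← hur] at hx hy
  obtain ⟨i, rfl⟩ := hx
  obtain ⟨j, rfl⟩ := hy
  have hij : i ≠ j := fun h => hxyne (congrArg u h)
  rcases lt_trichotomy i j with h | h | h
  · exact main i j h hxw hyw
  · exact absurd h hij
  · exact main j i h hyw hxw
end

section
/- Let G = (V, E) with V = P ⊔ N be a proper tagged probe interval graph with probes P and nonprobes N such that the induced subgraph G_P is connected and reduced (no two distinct probe vertices have the same closed neighborhood in G_P). Fix a canonical representation of G_P with probe enumeration u_1, …, u_p and canonical sequence S : {1, …, 2p} → {1, …, p}. Suppose w ∈ N has at least two neighbors in P and there are two perfect substrings of w in S whose position ranges intersect in exactly one position. Then either S(1) = 1, S(2) = 2, S(3) = 1 and the neighbors of w in P are exactly {u_1, u_2}, or S(2p−2) = p, S(2p−1) = p−1, S(2p) = p and the neighbors of w in P are exactly {u_{p−1}, u_p}. -/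
open Set

set_option maxHeartbeats 1000000 in
lemma aux8 {p : ℕ} (A : Fin p → Fin p → Prop) (W : Fin p → Prop)
    (S : Fin (2 * p) → Fin p) (L R : Fin p → Fin (2 * p))
    (hLmono : StrictMono L) (hRmono : StrictMono R)
    (hLR : ∀ i, L i < R i) (hLneR : ∀ i j, L i ≠ R j)
    (hSL : ∀ i, S (L i) = i) (hSR : ∀ i, S (R i) = i)
    (hLorR : ∀ k, k = L (S k) ∨ k = R (S k))
    (hadj : ∀ i j : Fin p, i < j → (A i j ↔ L j < R i))
    (hsymm : ∀ i j, A i j ↔ A j i)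
    (hcons : ∀ (a : ℕ) (h : a + 1 < p), A ⟨a, by omega⟩ ⟨a + 1, h⟩)
    (hredI : ∀ i j : Fin p, (∀ k, (k = i ∨ A i k) ↔ (k = j ∨ A j k)) → i = j)
    (s₁ k₀ t₂ : Fin (2 * p))
    (hps1 : ∀ k, s₁ ≤ k → k ≤ k₀ → W (S k))
    (hps1' : ∀ i, W i → ∃ k, s₁ ≤ k ∧ k ≤ k₀ ∧ S k = i)
    (hps2 : ∀ k, k₀ ≤ k → k ≤ t₂ → W (S k))
    (hps2' : ∀ i, W i → ∃ k, k₀ ≤ k ∧ k ≤ t₂ ∧ S k = i)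
    (htwo : ∃ i j : Fin p, i ≠ j ∧ W i ∧ W j) :
    ((∀ k : Fin (2 * p),
        ((k : ℕ) = 0 → (S k : ℕ) = 0) ∧
        ((k : ℕ) = 1 → (S k : ℕ) = 1) ∧
        ((k : ℕ) = 2 → (S k : ℕ) = 0)) ∧
      (∀ i : Fin p, W i ↔ ((i : ℕ) = 0 ∨ (i : ℕ) = 1)))
    ∨
    ((∀ k : Fin (2 * p),
        ((k : ℕ) = 2 * p - 3 → (S k : ℕ) = p - 1) ∧
        ((k : ℕ) = 2 * p - 2 → (S k : ℕ) = p - 2) ∧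
        ((k : ℕ) = 2 * p - 1 → (S k : ℕ) = p - 1)) ∧
      (∀ i : Fin p, W i ↔ ((i : ℕ) = p - 2 ∨ (i : ℕ) = p - 1))) := by
  obtain ⟨i', j', hij', hWi', hWj'⟩ := htwo
  set m : Fin p := S k₀ with hm
  have hp1 : 0 < p := m.pos
  -- s₁ < k₀ < t₂
  have hs₁k₀ : s₁ < k₀ := by
    rcases lt_or_ge s₁ k₀ with h | h
    · exact h
    exfalso
    obtain ⟨k, hk1, hk2, hk3⟩ := hps1' _ hWi'
    obtain ⟨k', hk1', hk2', hk3'⟩ := hps1' _ hWj'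
    have hks : k = k' :=
      le_antisymm ((hk2.trans h).trans hk1') ((hk2'.trans h).trans hk1)
    exact hij' (by rw [← hk3, ← hk3', hks])
  have hk₀t₂ : k₀ < t₂ := by
    rcases lt_or_ge k₀ t₂ with h | h
    · exact h
    exfalso
    obtain ⟨k, hk1, hk2, hk3⟩ := hps2' _ hWi'
    obtain ⟨k', hk1', hk2', hk3'⟩ := hps2' _ hWj'
    have hks : k = k' :=
      le_antisymm ((hk2.trans h).trans hk1') ((hk2'.trans h).trans hk1)
    exact hij' (by rw [← hk3, ← hk3', hks])
  have hWm : W m := hps1 k₀ hs₁k₀.le le_rfl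
  -- key straddling fact
  have key : ∀ i, W i → i ≠ m →
      s₁ ≤ L i ∧ L i < k₀ ∧ k₀ < R i ∧ R i ≤ t₂ := by
    intro i hWi him
    obtain ⟨k, hk1, hk2, hk3⟩ := hps1' i hWi
    obtain ⟨k', hk1', hk2', hk3'⟩ := hps2' i hWi
    have hkne : k ≠ k₀ := by
      intro h; exact him (by rw [← hk3, h, hm])
    have hk'ne : k' ≠ k₀ := by
      intro h; exact him (by rw [← hk3', h, hm])
    have hklt : k < k₀ := lt_of_le_of_ne hk2 hkne
    have hk'gt : k₀ < k' := lt_of_le_of_ne hk1' (Ne.symm hk'ne)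
    have h1 : k = L i ∨ k = R i := by
      have := hLorR k; rw [hk3] at this; exact this
    have h2 : k' = L i ∨ k' = R i := by
      have := hLorR k'; rw [hk3'] at this; exact this
    rcases h1 with h1 | h1 <;> rcases h2 with h2 | h2
    · exact absurd (h1.trans h2.symm) (ne_of_lt (hklt.trans hk'gt))
    · exact ⟨h1 ▸ hk1, h1 ▸ hklt, h2 ▸ hk'gt, h2 ▸ hk2'⟩
    · exact absurd (hLR i) (not_lt.mpr (by rw [← h1, ← h2]; exact (hklt.trans hk'gt).le))
    · exact absurd (h1.trans h2.symm) (ne_of_lt (hklt.trans hk'gt))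
  -- an element of W different from m
  have hex : ∃ i, W i ∧ i ≠ m := by
    rcases eq_or_ne i' m with h | h
    · exact ⟨j', hWj', by rw [← h]; exact hij'.symm⟩
    · exact ⟨i', hWi', h⟩
  obtain ⟨i₀, hWi₀, hi₀m⟩ := hex
  rcases hLorR k₀ with hcase | hcase
  · -- k₀ = L m : LEFT case
    left
    have hvs₁k₀ : (s₁ : ℕ) < (k₀ : ℕ) := hs₁k₀
    have hvk₀t₂ : (k₀ : ℕ) < (t₂ : ℕ) := hk₀t₂
    have hlt : ∀ i, W i → i ≠ m → i < m := by
      intro i hWi him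
      have h := (key i hWi him).2.1
      rw [hcase] at h
      exact hLmono.lt_iff_lt.mp h
    have hi₀lt : i₀ < m := hlt i₀ hWi₀ hi₀m
    have hvi₀m : (i₀ : ℕ) < (m : ℕ) := hi₀lt
    have hmlt : (m : ℕ) < p := m.isLt
    have hstep : ∀ (a : ℕ) (h : a + 1 < p), W ⟨a + 1, h⟩ → (⟨a + 1, h⟩ : Fin p) < m →
        W ⟨a, by omega⟩ := by
      intro a h hW hltm
      have hnem : (⟨a + 1, h⟩ : Fin p) ≠ m := hltm.ne
      have hk := key _ hW hnem
      have hA := hcons a h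
      have hlt2 : (⟨a, by omega⟩ : Fin p) < ⟨a + 1, h⟩ := by
        show a < a + 1; omega
      have hLlt := (hadj _ _ hlt2).mp hA
      have h1 : s₁ < R ⟨a, by omega⟩ := lt_of_le_of_lt hk.1 hLlt
      have h2 : R ⟨a, by omega⟩ ≤ t₂ := (hRmono hlt2).le.trans hk.2.2.2
      rcases le_or_gt (R ⟨a, by omega⟩) k₀ with hc | hc
      · have := hps1 _ h1.le hc; rwa [hSR] at this
      · have := hps2 _ hc.le h2; rwa [hSR] at this
    have hdw : ∀ d : ℕ, d ≤ (i₀ : ℕ) → W ⟨(i₀ : ℕ) - d, by omega⟩ := by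
      intro d
      induction d with
      | zero =>
        intro _
        have e : (⟨(i₀ : ℕ) - 0, by omega⟩ : Fin p) = i₀ :=
          Fin.ext (by show (i₀ : ℕ) - 0 = (i₀ : ℕ); omega)
        rw [e]; exact hWi₀
      | succ d ih =>
        intro hd
        have hW := ih (by omega)
        have h : ((i₀ : ℕ) - (d + 1)) + 1 < p := by omega
        have e : (⟨((i₀ : ℕ) - (d + 1)) + 1, h⟩ : Fin p) = ⟨(i₀ : ℕ) - d, by omega⟩ :=
          Fin.ext (by show ((i₀ : ℕ) - (d + 1)) + 1 = (i₀ : ℕ) - d; omega)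
        have hWs : W ⟨((i₀ : ℕ) - (d + 1)) + 1, h⟩ := by rw [e]; exact hW
        have hltm : (⟨((i₀ : ℕ) - (d + 1)) + 1, h⟩ : Fin p) < m := by
          show ((i₀ : ℕ) - (d + 1)) + 1 < (m : ℕ); omega
        exact hstep _ h hWs hltm
    obtain ⟨Z, hZv⟩ : ∃ Z : Fin p, (Z : ℕ) = 0 := ⟨⟨0, by omega⟩, rfl⟩
    have hZle : ∀ i : Fin p, Z ≤ i := by
      intro i; show (Z : ℕ) ≤ (i : ℕ); omega
    have hW0 : W Z := by
      have h2 := hdw (i₀ : ℕ) le_rfl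
      have e : (⟨(i₀ : ℕ) - (i₀ : ℕ), by omega⟩ : Fin p) = Z :=
        Fin.ext (by show (i₀ : ℕ) - (i₀ : ℕ) = (Z : ℕ); omega)
      rwa [e] at h2
    have hZne : Z ≠ m := by
      have h : Z < m := by show (Z : ℕ) < (m : ℕ); omega
      exact h.ne
    have keyZ := key Z hW0 hZne
    have hLfirst : ∀ k : Fin (2 * p), L Z ≤ k := by
      intro k
      rcases hLorR k with h | h
      · rw [h]; exact hLmono.monotone (hZle _)
      · rw [h]; exact (hLmono.monotone (hZle _)).trans (hLR _).le
    have hLZv : (L Z : ℕ) = 0 := by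
      have h1 : (L Z : ℕ) ≤ 0 := hLfirst ⟨0, by omega⟩
      omega
    have hs₁v : (s₁ : ℕ) = 0 := by
      have h1 : (s₁ : ℕ) ≤ (L Z : ℕ) := keyZ.1
      omega
    have hWiff : ∀ j : Fin p, W j ↔ j ≤ m := by
      intro j; constructor
      · intro hWj
        rcases eq_or_ne j m with h | h
        · exact h.le
        · exact (hlt j hWj h).le
      · intro hjm
        rcases eq_or_ne j m with h | h
        · rwa [h]
        · have hjm' : j < m := lt_of_le_of_ne hjm h
          have h1 : L j < k₀ := by rw [hcase]; exact hLmono hjm'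
          have h2 : s₁ ≤ L j := by show (s₁ : ℕ) ≤ (L j : ℕ); omega
          have := hps1 _ h2 h1.le; rwa [hSL] at this
    have hq1' : ∀ q : Fin (2 * p), q < k₀ → q = L (S q) ∧ S q < m := by
      intro q h2
      have h1 : s₁ ≤ q := by show (s₁ : ℕ) ≤ (q : ℕ); omega
      have hWq : W (S q) := hps1 q h1 h2.le
      rcases hLorR q with h | h
      · refine ⟨h, ?_⟩
        have hSqm : S q ≠ m := by
          intro hh; rw [hh, ← hcase] at h
          rw [h] at h2; exact lt_irrefl _ h2
        exact hlt _ hWq hSqm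
      · exfalso
        rcases eq_or_ne (S q) m with he | he
        · rw [he] at h
          have h3 : k₀ < R m := by rw [hcase]; exact hLR m
          rw [← h] at h3
          exact absurd (h2.trans h3) (lt_irrefl _)
        · have h3 := (key _ hWq he).2.2.1
          rw [← h] at h3
          exact absurd (h2.trans h3) (lt_irrefl _)
    have hLind : ∀ a : ℕ, a ≤ (m : ℕ) → ∀ h : a < p, (L ⟨a, h⟩ : ℕ) = a := by
      intro a
      induction a with
      | zero =>
        intro _ h
        have e : (⟨0, h⟩ : Fin p) = Z := Fin.ext (by show 0 = (Z : ℕ); omega)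
        rw [e, hLZv]
      | succ a ih =>
        intro ha h
        have h' : a < p := by omega
        have iha := ih (by omega) h'
        have hmono : L ⟨a, h'⟩ < L ⟨a + 1, h⟩ := hLmono (by show a < a + 1; omega)
        have hvmono : (L ⟨a, h'⟩ : ℕ) < (L ⟨a + 1, h⟩ : ℕ) := hmono
        by_contra hne
        have hgt : a + 1 < (L ⟨a + 1, h⟩ : ℕ) := by omega
        have hlem : (⟨a + 1, h⟩ : Fin p) ≤ m := by show a + 1 ≤ (m : ℕ); omega
        have hLk₀ : L ⟨a + 1, h⟩ ≤ k₀ := by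
          rw [hcase]; exact hLmono.monotone hlem
        have hvLk₀ : (L ⟨a + 1, h⟩ : ℕ) ≤ (k₀ : ℕ) := hLk₀
        obtain ⟨q, hqv⟩ : ∃ q : Fin (2 * p), (q : ℕ) = a + 1 := ⟨⟨a + 1, by omega⟩, rfl⟩
        have hqk₀ : q < k₀ := by show (q : ℕ) < (k₀ : ℕ); omega
        obtain ⟨hqL, hqm⟩ := hq1' q hqk₀
        have hgtS : (⟨a, h'⟩ : Fin p) < S q := by
          apply hLmono.lt_iff_lt.mp
          rw [← hqL]
          show (L ⟨a, h'⟩ : ℕ) < (q : ℕ); omega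
        have hltS : S q < (⟨a + 1, h⟩ : Fin p) := by
          apply hLmono.lt_iff_lt.mp
          rw [← hqL]
          show (q : ℕ) < (L ⟨a + 1, h⟩ : ℕ); omega
        have hv1 : a < (S q : ℕ) := hgtS
        have hv2 : (S q : ℕ) < a + 1 := hltS
        omega
    have hk₀m : (k₀ : ℕ) = (m : ℕ) := by
      have h1 := hLind (m : ℕ) le_rfl m.isLt
      have e : (⟨(m : ℕ), m.isLt⟩ : Fin p) = m := Fin.ext rfl
      rw [e] at h1
      rw [hcase]; exact h1
    have hq2' : ∀ q : Fin (2 * p), k₀ < q → q ≤ t₂ → q = R (S q) ∧ W (S q) := by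
      intro q h1 h2
      have hWq : W (S q) := hps2 q h1.le h2
      rcases hLorR q with h | h
      · exfalso
        have hSm : S q ≤ m := (hWiff _).mp hWq
        have h3 : L (S q) ≤ k₀ := by rw [hcase]; exact hLmono.monotone hSm
        rw [← h] at h3
        exact absurd (h1.trans_le h3) (lt_irrefl _)
      · exact ⟨h, hWq⟩
    have hRZv : (R Z : ℕ) = (k₀ : ℕ) + 1 := by
      have h1 : (k₀ : ℕ) < (R Z : ℕ) := keyZ.2.2.1
      obtain ⟨q, hqv⟩ : ∃ q : Fin (2 * p), (q : ℕ) = (k₀ : ℕ) + 1 :=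
        ⟨⟨(k₀ : ℕ) + 1, by omega⟩, rfl⟩
      have hk1 : k₀ < q := by show (k₀ : ℕ) < (q : ℕ); omega
      have hk2 : q ≤ t₂ := by show (q : ℕ) ≤ (t₂ : ℕ); omega
      obtain ⟨hqR, hqW⟩ := hq2' q hk1 hk2
      have h2 : R Z ≤ R (S q) := hRmono.monotone (hZle _)
      rw [← hqR] at h2
      have h2' : (R Z : ℕ) ≤ (q : ℕ) := h2
      omega
    have hmval : (m : ℕ) = 1 := by
      by_contra hmne
      have hm2 : 2 ≤ (m : ℕ) := by omega
      obtain ⟨O, hOv⟩ : ∃ O : Fin p, (O : ℕ) = 1 := ⟨⟨1, by omega⟩, rfl⟩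
      have hZO : Z < O := by show (Z : ℕ) < (O : ℕ); omega
      have hWO : W O := (hWiff O).mpr (by show (O : ℕ) ≤ (m : ℕ); omega)
      have hOne : O ≠ m := by
        have h : O < m := by show (O : ℕ) < (m : ℕ); omega
        exact h.ne
      have keyO := key O hWO hOne
      have hRO : (R O : ℕ) = (k₀ : ℕ) + 2 := by
        have h1 : R Z < R O := hRmono hZO
        have h1' : (R Z : ℕ) < (R O : ℕ) := h1
        have ht : (k₀ : ℕ) + 2 ≤ (t₂ : ℕ) := by
          have h2 : (R O : ℕ) ≤ (t₂ : ℕ) := keyO.2.2.2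
          omega
        obtain ⟨q', hq'v⟩ : ∃ q' : Fin (2 * p), (q' : ℕ) = (k₀ : ℕ) + 2 :=
          ⟨⟨(k₀ : ℕ) + 2, by omega⟩, rfl⟩
        have hk1 : k₀ < q' := by show (k₀ : ℕ) < (q' : ℕ); omega
        have hk2 : q' ≤ t₂ := by show (q' : ℕ) ≤ (t₂ : ℕ); omega
        obtain ⟨hqR, hqW⟩ := hq2' q' hk1 hk2
        have hSne : S q' ≠ Z := by
          intro hh; rw [hh] at hqR
          have : (q' : ℕ) = (R Z : ℕ) := congrArg Fin.val hqR
          omega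
        have hOle : O ≤ S q' := by
          show (O : ℕ) ≤ (S q' : ℕ)
          have : (S q' : ℕ) ≠ 0 := by
            intro hh; exact hSne (Fin.ext (by rw [hh, hZv]))
          omega
        have h3 : R O ≤ R (S q') := hRmono.monotone hOle
        rw [← hqR] at h3
        have h3' : (R O : ℕ) ≤ (q' : ℕ) := h3
        omega
      have hLO : (L O : ℕ) = 1 := by
        have h1 := hLind 1 (by omega) (by omega)
        have e : (⟨1, by omega⟩ : Fin p) = O := Fin.ext (by show 1 = (O : ℕ); omega)
        rwa [e] at h1
      have hAZO : A Z O := (hadj Z O hZO).mpr (by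
        show (L O : ℕ) < (R Z : ℕ); omega)
      have heq : ∀ k, (k = Z ∨ A Z k) ↔ (k = O ∨ A O k) := by
        intro k
        rcases lt_trichotomy k O with hk | hk | hk
        · have hkZ : k = Z := by
            apply Fin.ext
            have h' : (k : ℕ) < (O : ℕ) := hk
            rw [hZv]; omega
          rw [hkZ]
          constructor
          · intro _; exact Or.inr ((hsymm Z O).mp hAZO)
          · intro _; exact Or.inl rfl
        · rw [hk]
          constructor
          · intro _; exact Or.inl rfl
          · intro _; exact Or.inr hAZO
        · have e1 : A Z k ↔ L k < R Z := hadj Z k (hZO.trans hk)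
          have e2 : A O k ↔ L k < R O := hadj O k hk
          have hne2 : (L k : ℕ) ≠ (R Z : ℕ) := fun hh => hLneR k Z (Fin.ext hh)
          have hkO : k ≠ O := hk.ne'
          have hkZ : k ≠ Z := (hZO.trans hk).ne'
          rw [e1, e2]
          simp only [hkZ, hkO, false_or]
          show (L k : ℕ) < (R Z : ℕ) ↔ (L k : ℕ) < (R O : ℕ)
          omega
      have hfin := hredI Z O heq
      have hfin' : (Z : ℕ) = (O : ℕ) := congrArg Fin.val hfin
      omega
    refine ⟨?_, ?_⟩
    · intro k
      refine ⟨?_, ?_, ?_⟩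
      · intro hk
        have hkq : k = L Z := Fin.ext (by show (k : ℕ) = (L Z : ℕ); omega)
        rw [hkq, hSL, hZv]
      · intro hk
        have hkq : k = k₀ := Fin.ext (by show (k : ℕ) = (k₀ : ℕ); omega)
        rw [hkq, ← hm]; omega
      · intro hk
        have hkq : k = R Z := Fin.ext (by show (k : ℕ) = (R Z : ℕ); omega)
        rw [hkq, hSR, hZv]
    · intro i
      rw [hWiff i]
      show (i : ℕ) ≤ (m : ℕ) ↔ _
      constructor <;> (intro h; omega)
  · -- k₀ = R m : RIGHT case
    right
    have hvs₁k₀ : (s₁ : ℕ) < (k₀ : ℕ) := hs₁k₀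
    have hvk₀t₂ : (k₀ : ℕ) < (t₂ : ℕ) := hk₀t₂
    have hgt : ∀ i, W i → i ≠ m → m < i := by
      intro i hWi him
      have h := (key i hWi him).2.2.1
      rw [hcase] at h
      exact hRmono.lt_iff_lt.mp h
    have hi₀gt : m < i₀ := hgt i₀ hWi₀ hi₀m
    have hi₀p : (i₀ : ℕ) < p := i₀.isLt
    have hmlt : (m : ℕ) < (i₀ : ℕ) := hi₀gt
    have hp2 : 2 ≤ p := by omega
    have hup : ∀ d : ℕ, ∀ hd : (i₀ : ℕ) + d < p, W ⟨(i₀ : ℕ) + d, hd⟩ := by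
      intro d
      induction d with
      | zero =>
        intro hd
        have e : (⟨(i₀ : ℕ) + 0, hd⟩ : Fin p) = i₀ :=
          Fin.ext (by show (i₀ : ℕ) + 0 = (i₀ : ℕ); omega)
        rwa [e]
      | succ d ih =>
        intro hd
        have hd' : (i₀ : ℕ) + d < p := by omega
        have hW : W ⟨(i₀ : ℕ) + d, hd'⟩ := ih hd'
        have hnem : (⟨(i₀ : ℕ) + d, hd'⟩ : Fin p) ≠ m := by
          have h : m < (⟨(i₀ : ℕ) + d, hd'⟩ : Fin p) := by
            show (m : ℕ) < (i₀ : ℕ) + d; omega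
          exact h.ne'
        have hk := key _ hW hnem
        have hA := hcons ((i₀ : ℕ) + d) (by omega)
        have hlt2 : (⟨(i₀ : ℕ) + d, hd'⟩ : Fin p) < ⟨(i₀ : ℕ) + d + 1, by omega⟩ := by
          show (i₀ : ℕ) + d < (i₀ : ℕ) + d + 1; omega
        have hLlt := (hadj _ _ hlt2).mp hA
        have h1 : s₁ < L ⟨(i₀ : ℕ) + d + 1, by omega⟩ := lt_of_le_of_lt hk.1 (hLmono hlt2)
        have h2 : L ⟨(i₀ : ℕ) + d + 1, by omega⟩ ≤ t₂ := hLlt.le.trans hk.2.2.2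
        rcases le_or_gt (L ⟨(i₀ : ℕ) + d + 1, by omega⟩) k₀ with h | h
        · have := hps1 _ h1.le h; rwa [hSL] at this
        · have := hps2 _ h.le h2; rwa [hSL] at this
    obtain ⟨P1, hP1v⟩ : ∃ P1 : Fin p, (P1 : ℕ) = p - 1 := ⟨⟨p - 1, by omega⟩, rfl⟩
    have hWP1 : W P1 := by
      have h' : (i₀ : ℕ) + ((p - 1) - (i₀ : ℕ)) < p := by omega
      have h2 := hup _ h'
      have e : (⟨(i₀ : ℕ) + ((p - 1) - (i₀ : ℕ)), h'⟩ : Fin p) = P1 :=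
        Fin.ext (by show (i₀ : ℕ) + ((p - 1) - (i₀ : ℕ)) = (P1 : ℕ); omega)
      rwa [e] at h2
    have hleP1 : ∀ i : Fin p, i ≤ P1 := by
      intro i
      show (i : ℕ) ≤ (P1 : ℕ)
      have := i.isLt; omega
    have hmp : (m : ℕ) < p - 1 := by omega
    have hP1ne : P1 ≠ m := by
      have h : m < P1 := by show (m : ℕ) < (P1 : ℕ); omega
      exact h.ne'
    have keyP1 := key P1 hWP1 hP1ne
    have hWiff : ∀ j : Fin p, W j ↔ m ≤ j := by
      intro j; constructor
      · intro hWj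
        rcases eq_or_ne j m with h | h
        · exact h.ge
        · exact (hgt j hWj h).le
      · intro hmj
        rcases eq_or_ne j m with h | h
        · rwa [h]
        · have hmj' : m < j := lt_of_le_of_ne hmj (Ne.symm h)
          rcases eq_or_ne j P1 with hP | hP
          · rwa [hP]
          · have hjP1 : j < P1 := lt_of_le_of_ne (hleP1 j) hP
            have h1 : k₀ < R j := by rw [hcase]; exact hRmono hmj'
            have h2 : R j ≤ t₂ := (hRmono hjP1).le.trans keyP1.2.2.2
            have := hps2 _ h1.le h2; rwa [hSR] at this
    have hq2 : ∀ q : Fin (2 * p), k₀ < q → q ≤ t₂ → q = R (S q) ∧ m < S q := by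
      intro q h1 h2
      have hWq : W (S q) := hps2 q h1.le h2
      have hSqm : S q ≠ m := by
        intro h
        rcases hLorR q with hh | hh
        · rw [h] at hh
          have h3 : q < R m := hh ▸ hLR m
          rw [← hcase] at h3
          exact absurd h1 (not_lt.mpr h3.le)
        · rw [h, ← hcase] at hh
          exact absurd h1 (hh ▸ lt_irrefl _)
      refine ⟨?_, hgt _ hWq hSqm⟩
      rcases hLorR q with hh | hh
      · exfalso
        have h3 := (key _ hWq hSqm).2.1
        rw [← hh] at h3
        exact absurd (h1.trans h3) (lt_irrefl _)
      · exact hh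
    have hRlast : ∀ k : Fin (2 * p), k ≤ R P1 := by
      intro k
      rcases hLorR k with h | h
      · have h1 : L (S k) < R (S k) := hLR _
        have h2 : R (S k) ≤ R P1 := hRmono.monotone (hleP1 _)
        rw [h]; exact h1.le.trans h2
      · rw [h]; exact hRmono.monotone (hleP1 _)
    have hRP1val : (R P1 : ℕ) = 2 * p - 1 := by
      have h1 : 2 * p - 1 ≤ (R P1 : ℕ) := hRlast ⟨2 * p - 1, by omega⟩
      have h2 := (R P1).isLt
      omega
    have ht₂ : t₂ = R P1 := by
      have h1 : R P1 ≤ t₂ := keyP1.2.2.2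
      have h2 := (hq2 t₂ hk₀t₂ le_rfl).1
      have h3 : R (S t₂) ≤ R P1 := hRmono.monotone (hleP1 _)
      rw [← h2] at h3
      exact le_antisymm h3 h1
    have hq1 : ∀ q : Fin (2 * p), s₁ ≤ q → q < k₀ → q = L (S q) ∧ W (S q) := by
      intro q h1 h2
      have hWq : W (S q) := hps1 q h1 h2.le
      rcases hLorR q with h | h
      · exact ⟨h, hWq⟩
      · exfalso
        rcases eq_or_ne (S q) m with he | he
        · rw [he, ← hcase] at h
          rw [h] at h2; exact lt_irrefl _ h2
        · have h3 := (key _ hWq he).2.2.1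
          rw [← h] at h3
          exact absurd (h2.trans h3) (lt_irrefl _)
    obtain ⟨q₁, hq₁v⟩ : ∃ q₁ : Fin (2 * p), (q₁ : ℕ) = (k₀ : ℕ) - 1 :=
      ⟨⟨(k₀ : ℕ) - 1, by omega⟩, rfl⟩
    have hq₁lt : q₁ < k₀ := by show (q₁ : ℕ) < (k₀ : ℕ); omega
    have hq₁s : s₁ ≤ q₁ := by show (s₁ : ℕ) ≤ (q₁ : ℕ); omega
    obtain ⟨hq₁L, hq₁W⟩ := hq1 q₁ hq₁s hq₁lt
    have hLP1 : L P1 = q₁ := by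
      rcases eq_or_ne (S q₁) P1 with h | h
      · rw [← h]; exact hq₁L.symm
      · exfalso
        have h1 : (L P1 : ℕ) < (k₀ : ℕ) := keyP1.2.1
        have h2 : L P1 ≤ q₁ := by show (L P1 : ℕ) ≤ (q₁ : ℕ); omega
        have h3 : S q₁ < P1 := lt_of_le_of_ne (hleP1 _) h
        have h4 : L (S q₁) < L P1 := hLmono h3
        rw [← hq₁L] at h4
        exact absurd h2 (not_le.mpr h4)
    have hmval : (m : ℕ) = p - 2 := by
      by_contra hmne
      have hmlt2 : (m : ℕ) < p - 2 := by omega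
      have hp3 : 3 ≤ p := by omega
      obtain ⟨P2, hP2v⟩ : ∃ P2 : Fin p, (P2 : ℕ) = p - 2 := ⟨⟨p - 2, by omega⟩, rfl⟩
      have hP2ltP1 : P2 < P1 := by show (P2 : ℕ) < (P1 : ℕ); omega
      have hWP2 : W P2 := (hWiff P2).mpr (show (m : ℕ) ≤ (P2 : ℕ) by omega)
      have hP2ne : P2 ≠ m := by
        intro h
        have h' : (P2 : ℕ) = (m : ℕ) := congrArg Fin.val h
        omega
      have keyP2 := key P2 hWP2 hP2ne
      obtain ⟨M1, hM1v⟩ : ∃ M1 : Fin p, (M1 : ℕ) = (m : ℕ) + 1 :=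
        ⟨⟨(m : ℕ) + 1, by omega⟩, rfl⟩
      have hWM1 : W M1 := (hWiff M1).mpr (show (m : ℕ) ≤ (M1 : ℕ) by omega)
      have hM1ne : M1 ≠ m := by
        intro h
        have h' : (M1 : ℕ) = (m : ℕ) := congrArg Fin.val h
        omega
      have keyM1 := key M1 hWM1 hM1ne
      have hM1ltP1 : M1 < P1 := by show (M1 : ℕ) < (P1 : ℕ); omega
      have hLM1q₁ : L M1 < q₁ := by rw [← hLP1]; exact hLmono hM1ltP1
      have hs₁2 : (s₁ : ℕ) ≤ (k₀ : ℕ) - 2 ∧ 2 ≤ (k₀ : ℕ) := by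
        have h1 : (s₁ : ℕ) ≤ (L M1 : ℕ) := keyM1.1
        have h2 : (L M1 : ℕ) < (q₁ : ℕ) := hLM1q₁
        omega
      obtain ⟨q₂, hq₂v⟩ : ∃ q₂ : Fin (2 * p), (q₂ : ℕ) = (k₀ : ℕ) - 2 :=
        ⟨⟨(k₀ : ℕ) - 2, by omega⟩, rfl⟩
      have hq₂lt : q₂ < k₀ := by show (q₂ : ℕ) < (k₀ : ℕ); omega
      have hq₂s : s₁ ≤ q₂ := by show (s₁ : ℕ) ≤ (q₂ : ℕ); omega
      obtain ⟨hq₂L, hq₂W⟩ := hq1 q₂ hq₂s hq₂lt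
      have hq₁q₂ : q₂ ≠ q₁ := by
        intro h
        have h' : (q₂ : ℕ) = (q₁ : ℕ) := congrArg Fin.val h
        omega
      have hLP2 : L P2 = q₂ := by
        rcases eq_or_ne (S q₂) P2 with h | h
        · rw [← h]; exact hq₂L.symm
        · exfalso
          have hne1 : S q₂ ≠ P1 := by
            intro hh; rw [hh, hLP1] at hq₂L
            exact hq₁q₂ hq₂L
          have h3 : S q₂ < P2 := by
            show (S q₂ : ℕ) < (P2 : ℕ)
            have h5 := (S q₂).isLt
            have e1 : (S q₂ : ℕ) ≠ (P1 : ℕ) := fun hh => hne1 (Fin.ext hh)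
            omega
          have h4 : L (S q₂) < L P2 := hLmono h3
          have h5 : L P2 < L P1 := hLmono hP2ltP1
          rw [← hq₂L] at h4
          rw [hLP1] at h5
          have h4' : (q₂ : ℕ) < (L P2 : ℕ) := h4
          have h5' : (L P2 : ℕ) < (q₁ : ℕ) := h5
          omega
      have heq : ∀ k, (k = P2 ∨ A P2 k) ↔ (k = P1 ∨ A P1 k) := by
        intro k
        have hAP2P1 : A P2 P1 := (hadj P2 P1 hP2ltP1).mpr (by
          rw [hLP1]
          show (q₁ : ℕ) < (R P2 : ℕ)
          have h' : (k₀ : ℕ) < (R P2 : ℕ) := keyP2.2.2.1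
          omega)
        rcases lt_trichotomy k P2 with hk | hk | hk
        · have e2 : A P2 k ↔ L P2 < R k := (hsymm P2 k).trans (hadj k P2 hk)
          have e1 : A P1 k ↔ L P1 < R k := (hsymm P1 k).trans (hadj k P1 (hk.trans hP2ltP1))
          have hne2 : (R k : ℕ) ≠ (q₁ : ℕ) := by
            intro hh
            exact hLneR P1 k (hLP1.trans (Fin.ext hh.symm))
          have hkP2 : k ≠ P2 := hk.ne
          have hkP1 : k ≠ P1 := (hk.trans hP2ltP1).ne
          rw [e1, e2, hLP2, hLP1]
          simp only [hkP2, hkP1, false_or]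
          show (q₂ : ℕ) < (R k : ℕ) ↔ (q₁ : ℕ) < (R k : ℕ)
          omega
        · rw [hk]
          constructor
          · intro _; exact Or.inr ((hsymm P2 P1).mp hAP2P1)
          · intro _; exact Or.inl rfl
        · have hkP1 : k = P1 := by
            apply Fin.ext
            show (k : ℕ) = (P1 : ℕ)
            have h' : (P2 : ℕ) < (k : ℕ) := hk
            have := k.isLt
            omega
          rw [hkP1]
          constructor
          · intro _; exact Or.inl rfl
          · intro _; exact Or.inr hAP2P1
      have hfin := hredI P2 P1 heq
      have hfin' : (P2 : ℕ) = (P1 : ℕ) := congrArg Fin.val hfin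
      omega
    have hk₀val : (k₀ : ℕ) = 2 * p - 2 := by
      have ht2v : (t₂ : ℕ) = 2 * p - 1 := by rw [ht₂]; exact hRP1val
      obtain ⟨q, hqv⟩ : ∃ q : Fin (2 * p), (q : ℕ) = (k₀ : ℕ) + 1 :=
        ⟨⟨(k₀ : ℕ) + 1, by omega⟩, rfl⟩
      have h1 : k₀ < q := by show (k₀ : ℕ) < (q : ℕ); omega
      have h2 : q ≤ t₂ := by show (q : ℕ) ≤ (t₂ : ℕ); omega
      obtain ⟨hqR, hqgt⟩ := hq2 q h1 h2
      have hSq : S q = P1 := by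
        apply Fin.ext
        show (S q : ℕ) = (P1 : ℕ)
        have h5 := (S q).isLt
        have h6 : (m : ℕ) < (S q : ℕ) := hqgt
        omega
      rw [hSq] at hqR
      have h7 : (q : ℕ) = (R P1 : ℕ) := congrArg Fin.val hqR
      omega
    refine ⟨?_, ?_⟩
    · intro k
      refine ⟨?_, ?_, ?_⟩
      · intro hk
        have hkq : k = q₁ := Fin.ext (by show (k : ℕ) = (q₁ : ℕ); omega)
        have hSq₁ : S q₁ = P1 := by rw [← hLP1, hSL]
        rw [hkq, hSq₁, hP1v]
      · intro hk
        have hkq : k = k₀ := Fin.ext (by show (k : ℕ) = (k₀ : ℕ); omega)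
        rw [hkq, ← hm]; omega
      · intro hk
        have hkq : k = R P1 := Fin.ext (by show (k : ℕ) = (R P1 : ℕ); omega)
        rw [hkq, hSR, hP1v]
    · intro i
      rw [hWiff i]
      show (m : ℕ) ≤ (i : ℕ) ↔ _
      have := i.isLt
      constructor <;> (intro h; omega)

/-- in a PTPIG whose probe subgraph `G_P` is connected and reduced, with
a fixed canonical representation of `G_P` and canonical sequence `S`, if a nonprobe
`w` with at least two probe neighbors has two perfect substrings whose position
ranges intersect in exactly one position, then (0-based) either
`S 0 = 0, S 1 = 1, S 2 = 0` and the probe neighbors of `w` are exactly `u 0, u 1`,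
or `S (2p−3) = p−1, S (2p−2) = p−2, S (2p−1) = p−1` and the probe neighbors of `w`
are exactly `u (p−2), u (p−1)` (1-based: `S(1)=1, S(2)=2, S(3)=1` with neighbors
`{u₁,u₂}`, or `S(2p−2)=p, S(2p−1)=p−1, S(2p)=p` with neighbors `{u_{p−1},u_p}`). -/
theorem stmt8 {V : Type*} [Fintype V] (G : SimpleGraph V) (P N : Set V)
    (hPN : P = Nᶜ)
    (hind : ∀ w ∈ N, ∀ w' ∈ N, ¬ G.Adj w w')
    -- G is a PTPIG with probes P and nonprobes N:
    (hPTPIG : ∃ a b : V → ℝ,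
      (∀ x, a x ≤ b x) ∧
      (∀ x ∈ P, ∀ y ∈ P, x ≠ y →
        (G.Adj x y ↔ (Icc (a x) (b x) ∩ Icc (a y) (b y)).Nonempty)) ∧
      (∀ x ∈ P, ∀ y ∈ P, x ≠ y → ¬ Icc (a x) (b x) ⊂ Icc (a y) (b y)) ∧
      (∀ x ∈ P, ∀ w ∈ N,
        (G.Adj x w ↔ a x ∈ Icc (a w) (b w) ∨ b x ∈ Icc (a w) (b w))))
    -- G_P is connected:
    (hconn : (SimpleGraph.induce P G).Connected)
    -- G_P is reduced (no two distinct probes have the same closed neighborhood in G_P):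
    (hred : ∀ x ∈ P, ∀ y ∈ P,
      (∀ z ∈ P, ((z = x ∨ G.Adj x z) ↔ (z = y ∨ G.Adj y z))) → x = y)
    -- a fixed canonical representation of G_P with enumeration u and sequence S:
    {p : ℕ} (u : Fin p → V) (hu : Function.Injective u) (hur : Set.range u = P)
    (ℓ r : Fin p → ℝ)
    (hlr : ∀ i, ℓ i ≤ r i) (hl : StrictMono ℓ) (hr : StrictMono r)
    (hne : ∀ i j : Fin p, ℓ i ≠ r j)
    (hAdj : ∀ i j : Fin p, i ≠ j →
      (G.Adj (u i) (u j) ↔ (Icc (ℓ i) (r i) ∩ Icc (ℓ j) (r j)).Nonempty))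
    (S : Fin (2 * p) → Fin p) (hS : IsCanonSeq ℓ r S)
    (w : V) (hw : w ∈ N)
    (hw2 : ∃ x ∈ P, ∃ y ∈ P, x ≠ y ∧ G.Adj x w ∧ G.Adj y w)
    -- two perfect substrings of w whose position ranges intersect in exactly one place:
    (s₁ t₁ s₂ t₂ : Fin (2 * p))
    (h₁ : s₁ ≤ t₁) (h₂ : s₂ ≤ t₂)
    (hp₁ : PerfectSubstring G u S w s₁ t₁) (hp₂ : PerfectSubstring G u S w s₂ t₂)
    (hone : ∃! k : Fin (2 * p), (s₁ ≤ k ∧ k ≤ t₁) ∧ (s₂ ≤ k ∧ k ≤ t₂)) :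
    ((∀ k : Fin (2 * p),
        ((k : ℕ) = 0 → (S k : ℕ) = 0) ∧
        ((k : ℕ) = 1 → (S k : ℕ) = 1) ∧
        ((k : ℕ) = 2 → (S k : ℕ) = 0)) ∧
      (∀ i : Fin p, G.Adj (u i) w ↔ ((i : ℕ) = 0 ∨ (i : ℕ) = 1)))
    ∨
    ((∀ k : Fin (2 * p),
        ((k : ℕ) = 2 * p - 3 → (S k : ℕ) = p - 1) ∧
        ((k : ℕ) = 2 * p - 2 → (S k : ℕ) = p - 2) ∧
        ((k : ℕ) = 2 * p - 1 → (S k : ℕ) = p - 1)) ∧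
      (∀ i : Fin p, G.Adj (u i) w ↔ ((i : ℕ) = p - 2 ∨ (i : ℕ) = p - 1))) := by
  classical
  obtain ⟨val, hvmono, hvrange, hvend⟩ := hS
  have hltlr : ∀ i, ℓ i < r i := fun i => lt_of_le_of_ne (hlr i) (hne i i)
  have hLex : ∀ i : Fin p, ∃ k, val k = ℓ i := by
    intro i
    have h : ℓ i ∈ Set.range val := by rw [hvrange]; exact Or.inl ⟨i, rfl⟩
    exact h
  choose L hLval using hLex
  have hRex : ∀ i : Fin p, ∃ k, val k = r i := by
    intro i
    have h : r i ∈ Set.range val := by rw [hvrange]; exact Or.inr ⟨i, rfl⟩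
    exact h
  choose R hRval using hRex
  have hSL : ∀ i, S (L i) = i := by
    intro i
    rcases hvend (L i) with h | h
    · exact hl.injective (by rw [h, hLval])
    · exact absurd (h.trans (hLval i)).symm (hne i _)
  have hSR : ∀ i, S (R i) = i := by
    intro i
    rcases hvend (R i) with h | h
    · exact absurd (h.trans (hRval i)) (hne _ i)
    · exact hr.injective (by rw [h, hRval])
  have hLorR : ∀ k, k = L (S k) ∨ k = R (S k) := by
    intro k
    rcases hvend k with h | h
    · exact Or.inl (hvmono.injective (by rw [hLval]; exact h)).symm
    · exact Or.inr (hvmono.injective (by rw [hRval]; exact h)).symm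
  have hLmono : StrictMono L := fun i j hij =>
    hvmono.lt_iff_lt.mp (by rw [hLval, hLval]; exact hl hij)
  have hRmono : StrictMono R := fun i j hij =>
    hvmono.lt_iff_lt.mp (by rw [hRval, hRval]; exact hr hij)
  have hLR : ∀ i, L i < R i := fun i =>
    hvmono.lt_iff_lt.mp (by rw [hLval, hRval]; exact hltlr i)
  have hLneR : ∀ i j, L i ≠ R j := fun i j h =>
    hne i j (by rw [← hLval, ← hRval, h])
  have hadj' : ∀ i j : Fin p, i < j → (G.Adj (u i) (u j) ↔ L j < R i) := by
    intro i j hij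
    rw [hAdj i j hij.ne, Set.Icc_inter_Icc, Set.nonempty_Icc]
    constructor
    · intro h
      have h1 : ℓ j ≤ r i := le_trans le_sup_right (h.trans inf_le_left)
      have h2 : ℓ j < r i := lt_of_le_of_ne h1 (hne j i)
      exact hvmono.lt_iff_lt.mp (by rw [hLval, hRval]; exact h2)
    · intro h
      have h3 := hvmono h
      rw [hLval, hRval] at h3
      refine sup_le (le_inf (hlr i) ((hl.monotone hij.le).trans (hlr j)))
        (le_inf h3.le (hlr j))
  have hsymm' : ∀ i j : Fin p, G.Adj (u i) (u j) ↔ G.Adj (u j) (u i) :=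
    fun i j => ⟨fun h => h.symm, fun h => h.symm⟩
  have hmemP : ∀ i : Fin p, u i ∈ P := fun i => hur ▸ Set.mem_range_self i
  have hsurj : ∀ z ∈ P, ∃ i : Fin p, u i = z := by
    intro z hz; rw [← hur] at hz; exact hz
  have hcons : ∀ (a : ℕ) (h : a + 1 < p), G.Adj (u ⟨a, by omega⟩) (u ⟨a + 1, h⟩) := by
    intro a hap
    by_contra hno
    have hij : (⟨a, by omega⟩ : Fin p) < ⟨a + 1, hap⟩ := by show a < a + 1; omega
    have hri : r ⟨a, by omega⟩ < ℓ ⟨a + 1, hap⟩ := by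
      have h1 : ¬ (L ⟨a + 1, hap⟩ < R ⟨a, by omega⟩) :=
        fun hh => hno ((hadj' _ _ hij).mpr hh)
      have h2 : R (⟨a, by omega⟩ : Fin p) ≤ L ⟨a + 1, hap⟩ := not_lt.mp h1
      have h3 := hvmono.monotone h2
      rw [hLval, hRval] at h3
      exact lt_of_le_of_ne h3 (Ne.symm (hne _ _))
    have hcross : ∀ b c : Fin p, (b : ℕ) ≤ a → a + 1 ≤ (c : ℕ) → ¬ G.Adj (u b) (u c) := by
      intro b c hb hc hAdjbc
      have hbc : b < c := by show (b : ℕ) < (c : ℕ); omega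
      have h4 := (hadj' b c hbc).mp hAdjbc
      have h5 := hvmono h4
      rw [hLval, hRval] at h5
      have h6 : ℓ ⟨a + 1, hap⟩ ≤ ℓ c := hl.monotone (show ((⟨a + 1, hap⟩ : Fin p)) ≤ c from hc)
      have h7 : r b ≤ r ⟨a, by omega⟩ := hr.monotone (show b ≤ (⟨a, by omega⟩ : Fin p) from hb)
      linarith
    obtain ⟨wlk⟩ := hconn.preconnected ⟨u ⟨a, by omega⟩, hmemP _⟩ ⟨u ⟨a + 1, hap⟩, hmemP _⟩
    have hinv : ∀ (x y : ↥P) (q : (SimpleGraph.induce P G).Walk x y),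
        (∃ c : Fin p, (c : ℕ) ≤ a ∧ u c = x.1) →
        ∃ c : Fin p, (c : ℕ) ≤ a ∧ u c = y.1 := by
      intro x y q
      induction q with
      | nil => exact id
      | @cons x' b y' hxb q ih =>
        rintro ⟨c, hc1, hc2⟩
        apply ih
        obtain ⟨d, hd⟩ := hsurj b.1 b.2
        refine ⟨d, ?_, hd⟩
        by_contra hdc
        have hd1 : a + 1 ≤ (d : ℕ) := by omega
        have hGadj : G.Adj x'.1 b.1 := by simpa using hxb
        rw [← hc2, ← hd] at hGadj
        exact hcross c d hc1 hd1 hGadj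
    obtain ⟨c, hc1, hc2⟩ := hinv _ _ wlk ⟨⟨a, by omega⟩, le_rfl, rfl⟩
    have hce : c = ⟨a + 1, hap⟩ := hu hc2
    rw [hce] at hc1
    have hc1' : a + 1 ≤ a := hc1
    omega
  have hredI : ∀ i j : Fin p,
      (∀ k, (k = i ∨ G.Adj (u i) (u k)) ↔ (k = j ∨ G.Adj (u j) (u k))) → i = j := by
    intro i j h
    apply hu
    apply hred (u i) (hmemP i) (u j) (hmemP j)
    intro z hz
    obtain ⟨k, rfl⟩ := hsurj z hz
    have hk := h k
    constructor
    · rintro (h1 | h1)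
      · rcases hk.mp (Or.inl (hu h1)) with h2 | h2
        · exact Or.inl (by rw [h2])
        · exact Or.inr h2
      · rcases hk.mp (Or.inr h1) with h2 | h2
        · exact Or.inl (by rw [h2])
        · exact Or.inr h2
    · rintro (h1 | h1)
      · rcases hk.mpr (Or.inl (hu h1)) with h2 | h2
        · exact Or.inl (by rw [h2])
        · exact Or.inr h2
      · rcases hk.mpr (Or.inr h1) with h2 | h2
        · exact Or.inl (by rw [h2])
        · exact Or.inr h2
  have htwo : ∃ i j : Fin p, i ≠ j ∧ G.Adj (u i) w ∧ G.Adj (u j) w := by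
    obtain ⟨x, hxP, y, hyP, hxy, hxw, hyw⟩ := hw2
    obtain ⟨i, rfl⟩ := hsurj x hxP
    obtain ⟨j, rfl⟩ := hsurj y hyP
    exact ⟨i, j, fun h => hxy (by rw [h]), hxw, hyw⟩
  have hdeg : ∀ s t : Fin (2 * p), PerfectSubstring G u S w s t → s = t → False := by
    intro s t hp' hst
    obtain ⟨i, j, hijne, hAi, hAj⟩ := htwo
    obtain ⟨ki, hi1, hi2, hi3⟩ := hp'.2 i hAi
    obtain ⟨kj, hj1, hj2, hj3⟩ := hp'.2 j hAj
    rw [← hst] at hi2 hj2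
    have e1 : ki = s := le_antisymm hi2 hi1
    have e2 : kj = s := le_antisymm hj2 hj1
    exact hijne (by rw [← hi3, ← hj3, e1, e2])
  obtain ⟨k, ⟨⟨hks₁, hkt₁⟩, hks₂, hkt₂⟩, huni⟩ := hone
  have hmax : max s₁ s₂ = k :=
    huni _ ⟨⟨le_max_left _ _, (max_le hks₁ hks₂).trans hkt₁⟩,
      ⟨le_max_right _ _, (max_le hks₁ hks₂).trans hkt₂⟩⟩
  have hmin : min t₁ t₂ = k :=
    huni _ ⟨⟨hks₁.trans (le_min hkt₁ hkt₂), min_le_left _ _⟩,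
      ⟨hks₂.trans (le_min hkt₁ hkt₂), min_le_right _ _⟩⟩
  rcases max_choice s₁ s₂ with hM | hM <;> rcases min_choice t₁ t₂ with hm' | hm'
  · -- s₁ = k and t₁ = k : degenerate
    exact (hdeg s₁ t₁ hp₁ ((hM.symm.trans hmax).trans (hm'.symm.trans hmin).symm)).elim
  · -- s₁ = k and t₂ = k : shape B, ranges [s₂, k] and [k, t₁]
    have es₁ : s₁ = k := hM.symm.trans hmax
    have et₂ : t₂ = k := hm'.symm.trans hmin
    exact aux8 (fun i j => G.Adj (u i) (u j)) (fun i => G.Adj (u i) w) S L R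
      hLmono hRmono hLR hLneR hSL hSR hLorR hadj' hsymm' hcons hredI s₂ k t₁
      (fun k' h1 h2 => hp₂.1 k' h1 (by rw [et₂]; exact h2))
      (fun i hWi => by
        obtain ⟨k', h1, h2, h3⟩ := hp₂.2 i hWi
        exact ⟨k', h1, by rw [← et₂]; exact h2, h3⟩)
      (fun k' h1 h2 => hp₁.1 k' (by rw [es₁]; exact h1) h2)
      (fun i hWi => by
        obtain ⟨k', h1, h2, h3⟩ := hp₁.2 i hWi
        exact ⟨k', by rw [← es₁]; exact h1, h2, h3⟩)
      htwo
  · -- s₂ = k and t₁ = k : shape A, ranges [s₁, k] and [k, t₂]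
    have es₂ : s₂ = k := hM.symm.trans hmax
    have et₁ : t₁ = k := hm'.symm.trans hmin
    exact aux8 (fun i j => G.Adj (u i) (u j)) (fun i => G.Adj (u i) w) S L R
      hLmono hRmono hLR hLneR hSL hSR hLorR hadj' hsymm' hcons hredI s₁ k t₂
      (fun k' h1 h2 => hp₁.1 k' h1 (by rw [et₁]; exact h2))
      (fun i hWi => by
        obtain ⟨k', h1, h2, h3⟩ := hp₁.2 i hWi
        exact ⟨k', h1, by rw [← et₁]; exact h2, h3⟩)
      (fun k' h1 h2 => hp₂.1 k' (by rw [es₂]; exact h1) h2)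
      (fun i hWi => by
        obtain ⟨k', h1, h2, h3⟩ := hp₂.2 i hWi
        exact ⟨k', by rw [← es₂]; exact h1, h2, h3⟩)
      htwo
  · -- s₂ = k and t₂ = k : degenerate
    exact (hdeg s₂ t₂ hp₂ ((hM.symm.trans hmax).trans (hm'.symm.trans hmin).symm)).elim
end
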